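/- arXiv:1404.3997 — 5 statements merged into one kernel-verified Lean document; each statement's English description precedes it below -/
import Mathlib

section
/- Under the memoryless action-dependent source setup, suppose in addition that T = g(X^n) for a deterministic map g : 𝒳^n → 𝒯 (𝒯 finite) and that A^n = h(T) for a deterministic map h : 𝒯 → 𝒜^n (so A^n is a function of X^n through T). Then H(T) + H(X^n | Y^n, T) ≥ Σ_{i=1}^n [ I(X_i ; A_i) + H(X_i | A_i, Y_i) ]. -/
open Finset

/-- Probability that the random variable `X` takes the value `s`, under the pmf `p`. -/
noncomputable def probOf {Ω S : Type*} [Fintype Ω] [DecidableEq S]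
    (p : Ω → ℝ) (X : Ω → S) (s : S) : ℝ :=
  ∑ ω : Ω, if X ω = s then p ω else 0

/-- Base-2 Shannon entropy of the random variable `X` under the pmf `p`. -/
noncomputable def ent {Ω S : Type*} [Fintype Ω] [Fintype S] [DecidableEq S]
    (p : Ω → ℝ) (X : Ω → S) : ℝ :=
  ∑ s : S, Real.negMulLog (probOf p X s) / Real.log 2

/-- Conditional entropy `H(X | Y)` (base 2). -/
noncomputable def condEnt {Ω S T : Type*} [Fintype Ω] [Fintype S] [Fintype T]
    [DecidableEq S] [DecidableEq T] (p : Ω → ℝ) (X : Ω → S) (Y : Ω → T) : ℝ :=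
  ent p (fun ω => (X ω, Y ω)) - ent p Y

/-- Mutual information `I(X ; Y)` (base 2). -/
noncomputable def mutInfo {Ω S T : Type*} [Fintype Ω] [Fintype S] [Fintype T]
    [DecidableEq S] [DecidableEq T] (p : Ω → ℝ) (X : Ω → S) (Y : Ω → T) : ℝ :=
  ent p X + ent p Y - ent p (fun ω => (X ω, Y ω))

/-- Joint pmf of `(X^n, Y^n)` in the memoryless action-dependent source setup:
`X^n` i.i.d. `∼ μ`, `A^n = f X^n`, and conditionally on `X^n = x^n` the coordinates of `Y^n`
are independent with `Y_i ∼ W (x_i) (f x^n i)`. -/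
noncomputable def jointPmf {n : ℕ} {𝒳 𝒜 𝒴 : Type*}
    (μ : 𝒳 → ℝ) (f : (Fin n → 𝒳) → (Fin n → 𝒜)) (W : 𝒳 → 𝒜 → 𝒴 → ℝ) :
    (Fin n → 𝒳) × (Fin n → 𝒴) → ℝ :=
  fun ω => (∏ i, μ (ω.1 i)) * ∏ i, W (ω.1 i) (f ω.1 i) (ω.2 i)

/-!
Take `-E log₂` of the factorisation `p(xⁿ, yⁿ) = ∏ μ(xᵢ) · ∏ W(yᵢ | xᵢ, aᵢ)`: since
`P(Xᵢ, Aᵢ, Yᵢ) = P(Xᵢ, Aᵢ) · W`, this gives the identity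
`H(Xⁿ, Yⁿ) = ∑ᵢ [H(Xᵢ) + H(Xᵢ, Aᵢ, Yᵢ) - H(Xᵢ, Aᵢ)]`.
Gibbs' inequality against the sub-probability `q(yⁿ, t) = P(T = t) ∏ᵢ P(Yᵢ = yᵢ | Aᵢ = h(t)ᵢ)`
gives `H(Yⁿ, T) ≤ H(T) + ∑ᵢ H(Yᵢ | Aᵢ)`, because `Aᵢ` is a function of `T`.
As `T` is a function of `Xⁿ`, `H(Xⁿ | Yⁿ, T) = H(Xⁿ, Yⁿ) - H(Yⁿ, T)`, and the claim is a linear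
combination of these two facts.
-/

open Real

section probOf

variable {Ω S : Type*} [Fintype Ω] [DecidableEq S] {p : Ω → ℝ}

lemma sum_probOf_mul [Fintype S] (p : Ω → ℝ) (X : Ω → S) (φ : S → ℝ) :
    ∑ s, probOf p X s * φ s = ∑ ω, p ω * φ (X ω) := by
  simp only [probOf, sum_mul, ite_mul, zero_mul]
  rw [sum_comm]
  simp

lemma sum_probOf [Fintype S] (p : Ω → ℝ) (X : Ω → S) : ∑ s, probOf p X s = ∑ ω, p ω := by
  simpa using sum_probOf_mul p X 1

lemma probOf_nonneg (hp0 : ∀ ω, 0 ≤ p ω) (X : Ω → S) (s : S) : 0 ≤ probOf p X s :=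
  sum_nonneg fun ω _ => by split_ifs <;> simp [hp0 ω]

lemma le_probOf_apply (hp0 : ∀ ω, 0 ≤ p ω) (X : Ω → S) (ω : Ω) : p ω ≤ probOf p X (X ω) := by
  unfold probOf
  simpa using single_le_sum (f := fun ω' => if X ω' = X ω then p ω' else 0)
    (fun ω' _ => by split_ifs <;> simp [hp0 ω']) (mem_univ ω)

lemma probOf_apply_pos (hp0 : ∀ ω, 0 ≤ p ω) (X : Ω → S) {ω : Ω} (hω : 0 < p ω) :
    0 < probOf p X (X ω) :=
  hω.trans_le (le_probOf_apply hp0 X ω)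

lemma exists_pos_of_probOf_pos {X : Ω → S} {s : S} (hs : 0 < probOf p X s) :
    ∃ ω, X ω = s ∧ 0 < p ω := by
  obtain ⟨ω, -, hω⟩ := exists_lt_of_sum_lt (f := fun _ => (0 : ℝ)) (by simpa [probOf] using hs)
  by_cases hXω : X ω = s
  · exact ⟨ω, hXω, by simpa [hXω] using hω⟩
  · simp [hXω] at hω

lemma probOf_apply_of_injective (p : Ω → ℝ) {Z : Ω → S} (hZ : Function.Injective Z) (ω : Ω) :
    probOf p Z (Z ω) = p ω := by
  rw [probOf, sum_eq_single ω (fun ω' _ hω' => if_neg (hZ.ne hω')) (by simp), if_pos rfl]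

lemma sum_probOf_pair {T : Type*} [Fintype T] [DecidableEq T] (p : Ω → ℝ) (U : Ω → S)
    (V : Ω → T) (u : S) : ∑ v, probOf p (fun ω => (U ω, V ω)) (u, v) = probOf p U u := by
  simp only [probOf, Prod.mk.injEq]
  rw [sum_comm]
  refine sum_congr rfl fun ω _ => ?_
  by_cases hU : U ω = u <;> simp [hU]

lemma sum_mul_congr_of_pos (hp0 : ∀ ω, 0 ≤ p ω) {F G : Ω → ℝ}
    (h : ∀ ω, 0 < p ω → F ω = G ω) : ∑ ω, p ω * F ω = ∑ ω, p ω * G ω := by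
  refine sum_congr rfl fun ω _ => ?_
  rcases (hp0 ω).eq_or_lt with hω | hω
  · simp [← hω]
  · rw [h ω hω]

lemma ent_eq_neg_sum_mul_logb [Fintype S] (p : Ω → ℝ) (X : Ω → S) :
    ent p X = -∑ ω, p ω * logb 2 (probOf p X (X ω)) := by
  rw [← sum_probOf_mul p X (fun s => logb 2 (probOf p X s)), ent, ← sum_neg_distrib]
  refine sum_congr rfl fun s _ => ?_
  rw [negMulLog, logb]
  ring

lemma ent_of_injective [Fintype S] (p : Ω → ℝ) {Z : Ω → S} (hZ : Function.Injective Z) :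
    ent p Z = -∑ ω, p ω * logb 2 (p ω) := by
  simp only [ent_eq_neg_sum_mul_logb, probOf_apply_of_injective p hZ]

lemma negMulLog_add_mul_log_le {P q : ℝ} (hP : 0 ≤ P) (hq : 0 ≤ q) (hPq : 0 < P → 0 < q) :
    negMulLog P + P * log q ≤ q - P := by
  rcases hP.eq_or_lt with rfl | hP
  · simpa using hq
  have hq := hPq hP
  have hlog : log (q / P) ≤ q / P - 1 := log_le_sub_one_of_pos (div_pos hq hP)
  rw [log_div hq.ne' hP.ne'] at hlog
  have := mul_le_mul_of_nonneg_left hlog hP.le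
  rw [mul_sub, mul_sub, mul_div_cancel₀ _ hP.ne'] at this
  rw [negMulLog]
  linarith

lemma ent_le_neg_sum_mul_logb [Fintype S] (hp0 : ∀ ω, 0 ≤ p ω) (hp1 : ∑ ω, p ω = 1)
    (X : Ω → S) (q : S → ℝ) (hq0 : ∀ s, 0 ≤ q s) (hq1 : ∑ s, q s ≤ 1)
    (hpq : ∀ ω, 0 < p ω → 0 < q (X ω)) :
    ent p X ≤ -∑ ω, p ω * logb 2 (q (X ω)) := by
  have hPq : ∀ s, 0 < probOf p X s → 0 < q s := fun s hs => by
    obtain ⟨ω, rfl, hω⟩ := exists_pos_of_probOf_pos hs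
    exact hpq ω hω
  have key : ∑ s, (negMulLog (probOf p X s) + probOf p X s * log (q s)) ≤ 0 :=
    calc _ ≤ ∑ s, (q s - probOf p X s) :=
          sum_le_sum fun s _ => negMulLog_add_mul_log_le (probOf_nonneg hp0 X s) (hq0 s) (hPq s)
      _ ≤ 0 := by rw [sum_sub_distrib, sum_probOf, hp1]; linarith
  have hsplit : ent p X + ∑ ω, p ω * logb 2 (q (X ω))
      = (∑ s, (negMulLog (probOf p X s) + probOf p X s * log (q s))) / log 2 := by
    rw [← sum_probOf_mul p X (fun s => logb 2 (q s)), ent, ← sum_add_distrib, sum_div]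
    simp only [logb, add_div, mul_div_assoc]
  have := div_nonpos_of_nonpos_of_nonneg key (log_nonneg one_le_two)
  linarith

end probOf

section pi

variable {ι 𝒵 : Type*} [Fintype ι] [DecidableEq ι] [Fintype 𝒵]

lemma sum_prod_apply_eq_one (V : ι → 𝒵 → ℝ) (hV : ∀ j, ∑ z, V j z = 1) :
    ∑ g : ι → 𝒵, ∏ j, V j (g j) = 1 := by
  simp [← Fintype.prod_sum, hV]

lemma sum_ite_prod_apply [DecidableEq 𝒵] (V : ι → 𝒵 → ℝ) (hV : ∀ j, ∑ z, V j z = 1)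
    (i : ι) (y : 𝒵) :
    ∑ g : ι → 𝒵, (if g i = y then ∏ j, V j (g j) else 0) = V i y := by
  have hcut : ∀ g : ι → 𝒵, (if g i = y then ∏ j, V j (g j) else 0)
      = ∏ j, if j = i → g j = y then V j (g j) else 0 := fun g => by
    rw [prod_ite_zero]
    simp
  simp_rw [hcut]
  rw [← Fintype.prod_sum fun j z => if j = i → z = y then V j z else 0,
    prod_eq_single i (fun j _ hj => by simp [hj, hV j]) (by simp)]
  simp

end pi

section jointPmf

variable {n : ℕ} {𝒳 𝒜 𝒴 : Type*} {μ : 𝒳 → ℝ} {f : (Fin n → 𝒳) → (Fin n → 𝒜)}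
  {W : 𝒳 → 𝒜 → 𝒴 → ℝ}

lemma jointPmf_nonneg (hμ0 : ∀ x, 0 ≤ μ x) (hW0 : ∀ x a y, 0 ≤ W x a y) (ω) :
    0 ≤ jointPmf μ f W ω :=
  mul_nonneg (prod_nonneg fun _ _ => hμ0 _) (prod_nonneg fun _ _ => hW0 _ _ _)

lemma sum_jointPmf_snd [Fintype 𝒴] (hW1 : ∀ x a, ∑ y, W x a y = 1) (xs : Fin n → 𝒳) :
    ∑ ys, jointPmf μ f W (xs, ys) = ∏ j, μ (xs j) := by
  simp only [jointPmf]
  rw [← mul_sum, sum_prod_apply_eq_one _ fun j => hW1 _ _, mul_one]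

lemma sum_ite_jointPmf_snd [Fintype 𝒴] [DecidableEq 𝒴] (hW1 : ∀ x a, ∑ y, W x a y = 1)
    (xs : Fin n → 𝒳) (i : Fin n) (y : 𝒴) :
    ∑ ys : Fin n → 𝒴, (if ys i = y then jointPmf μ f W (xs, ys) else 0)
      = (∏ j, μ (xs j)) * W (xs i) (f xs i) y := by
  simp only [jointPmf, ← mul_ite_zero, ← mul_sum]
  rw [sum_ite_prod_apply _ fun j => hW1 _ _]

lemma sum_jointPmf [Fintype 𝒳] [Fintype 𝒴] (hμ1 : ∑ x, μ x = 1)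
    (hW1 : ∀ x a, ∑ y, W x a y = 1) :
    ∑ ω, jointPmf μ f W ω = 1 := by
  rw [Fintype.sum_prod_type]
  simp only [sum_jointPmf_snd hW1]
  exact sum_prod_apply_eq_one _ fun _ => hμ1

lemma probOf_jointPmf_coord [Fintype 𝒳] [DecidableEq 𝒳] [Fintype 𝒴] (hμ1 : ∑ x, μ x = 1)
    (hW1 : ∀ x a, ∑ y, W x a y = 1) (i : Fin n) (x : 𝒳) :
    probOf (jointPmf μ f W) (fun ω => ω.1 i) x = μ x := by
  simp only [probOf, Fintype.sum_prod_type]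
  rw [sum_congr rfl fun xs _ => sum_ite_irrel _ _ _ _]
  simp only [sum_const_zero, sum_jointPmf_snd hW1]
  exact sum_ite_prod_apply _ (fun _ => hμ1) i x

lemma probOf_jointPmf_coord_action_obs [Fintype 𝒳] [DecidableEq 𝒳] [DecidableEq 𝒜]
    [Fintype 𝒴] [DecidableEq 𝒴] (hW1 : ∀ x a, ∑ y, W x a y = 1) (i : Fin n) (x : 𝒳)
    (a : 𝒜) (y : 𝒴) :
    probOf (jointPmf μ f W) (fun ω => (ω.1 i, (f ω.1 i, ω.2 i))) (x, (a, y))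
      = probOf (jointPmf μ f W) (fun ω => (ω.1 i, f ω.1 i)) (x, a) * W x a y := by
  rw [probOf, probOf, Fintype.sum_prod_type, Fintype.sum_prod_type, sum_mul]
  refine sum_congr rfl fun xs _ => ?_
  by_cases hxa : xs i = x ∧ f xs i = a
  · obtain ⟨rfl, rfl⟩ := hxa
    simp only [Prod.mk.injEq, true_and, if_true, sum_ite_jointPmf_snd hW1, sum_jointPmf_snd hW1]
  · have hL : ∀ ys : Fin n → 𝒴, (xs i, (f xs i, ys i)) ≠ (x, (a, y)) := fun ys h => by
      simp only [Prod.mk.injEq] at h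
      exact hxa ⟨h.1, h.2.1⟩
    have hR : (xs i, f xs i) ≠ (x, a) := by simpa using hxa
    simp [hL, hR]

end jointPmf

lemma ent_jointPmf_of_injective {n : ℕ} {𝒳 𝒜 𝒴 S : Type*} [Fintype 𝒳] [DecidableEq 𝒳]
    [Fintype 𝒜] [DecidableEq 𝒜] [Fintype 𝒴] [DecidableEq 𝒴] [Fintype S] [DecidableEq S]
    {μ : 𝒳 → ℝ} {f : (Fin n → 𝒳) → (Fin n → 𝒜)} {W : 𝒳 → 𝒜 → 𝒴 → ℝ}
    (hμ0 : ∀ x, 0 ≤ μ x) (hμ1 : ∑ x, μ x = 1)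
    (hW0 : ∀ x a y, 0 ≤ W x a y) (hW1 : ∀ x a, ∑ y, W x a y = 1)
    {Z : (Fin n → 𝒳) × (Fin n → 𝒴) → S} (hZ : Function.Injective Z) :
    ent (jointPmf μ f W) Z
      = ∑ i, (ent (jointPmf μ f W) (fun ω => ω.1 i)
          + (ent (jointPmf μ f W) (fun ω => (ω.1 i, (f ω.1 i, ω.2 i)))
            - ent (jointPmf μ f W) (fun ω => (ω.1 i, f ω.1 i)))) := by
  set p := jointPmf μ f W
  have hp0 : ∀ ω, 0 ≤ p ω := jointPmf_nonneg hμ0 hW0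
  have hlogb : ∀ ω, 0 < p ω → logb 2 (p ω)
      = ∑ i, (logb 2 (probOf p (fun ω => ω.1 i) (ω.1 i))
        + (logb 2 (probOf p (fun ω => (ω.1 i, (f ω.1 i, ω.2 i))) (ω.1 i, (f ω.1 i, ω.2 i)))
          - logb 2 (probOf p (fun ω => (ω.1 i, f ω.1 i)) (ω.1 i, f ω.1 i)))) := by
    intro ω hω
    simp only [p]
    have hμW : (∀ i, μ (ω.1 i) ≠ 0) ∧ ∀ i, W (ω.1 i) (f ω.1 i) (ω.2 i) ≠ 0 := by
      simpa [p, jointPmf, prod_ne_zero_iff] using hω.ne'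
    have hXA : ∀ i,
        probOf (jointPmf μ f W) (fun ω => (ω.1 i, f ω.1 i)) (ω.1 i, f ω.1 i) ≠ 0 :=
      fun i => (probOf_apply_pos hp0 (fun ω => (ω.1 i, f ω.1 i)) hω).ne'
    simp only [probOf_jointPmf_coord hμ1 hW1, probOf_jointPmf_coord_action_obs hW1,
      logb_mul (hXA _) (hμW.2 _), add_sub_cancel_left, sum_add_distrib]
    simp only [jointPmf]
    rw [logb_mul (prod_ne_zero_iff.2 fun i _ => hμW.1 i) (prod_ne_zero_iff.2 fun i _ => hμW.2 i),
      logb_prod _ _ fun i _ => hμW.1 i, logb_prod _ _ fun i _ => hμW.2 i]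
  rw [ent_of_injective p hZ, sum_mul_congr_of_pos hp0 hlogb]
  simp only [ent_eq_neg_sum_mul_logb, mul_sum, mul_add, mul_sub]
  rw [sum_comm, ← sum_neg_distrib]
  refine sum_congr rfl fun i _ => ?_
  simp only [sum_add_distrib, sum_sub_distrib]
  ring

lemma ent_pair_le {Ω ι 𝒜 𝒴 𝒯 : Type*} [Fintype Ω] [Fintype ι] [DecidableEq ι]
    [Fintype 𝒜] [DecidableEq 𝒜] [Fintype 𝒴] [DecidableEq 𝒴] [Fintype 𝒯] [DecidableEq 𝒯]
    {p : Ω → ℝ} (hp0 : ∀ ω, 0 ≤ p ω) (hp1 : ∑ ω, p ω = 1)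
    (Y : Ω → ι → 𝒴) (T : Ω → 𝒯) (a : 𝒯 → ι → 𝒜) :
    ent p (fun ω => (Y ω, T ω))
      ≤ ent p T + ∑ i, (ent p (fun ω => (a (T ω) i, Y ω i)) - ent p (fun ω => a (T ω) i)) := by
  let q : (ι → 𝒴) × 𝒯 → ℝ := fun s => probOf p T s.2 * ∏ i,
    probOf p (fun ω => (a (T ω) i, Y ω i)) (a s.2 i, s.1 i)
      / probOf p (fun ω => a (T ω) i) (a s.2 i)
  have hq0 : ∀ s, 0 ≤ q s := fun s => mul_nonneg (probOf_nonneg hp0 _ _)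
    (prod_nonneg fun i _ => div_nonneg (probOf_nonneg hp0 _ _) (probOf_nonneg hp0 _ _))
  have hq1 : ∑ s, q s ≤ 1 := by
    have hfactor : ∀ t i, ∑ y, probOf p (fun ω => (a (T ω) i, Y ω i)) (a t i, y)
        / probOf p (fun ω => a (T ω) i) (a t i) ≤ 1 := fun t i => by
      rw [← sum_div, sum_probOf_pair]
      exact div_self_le_one _
    calc ∑ s, q s = ∑ t, probOf p T t * ∏ i,
          ∑ y, probOf p (fun ω => (a (T ω) i, Y ω i)) (a t i, y)
            / probOf p (fun ω => a (T ω) i) (a t i) := by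
          rw [Fintype.sum_prod_type_right]
          simp only [q, ← mul_sum, Fintype.prod_sum]
      _ ≤ ∑ t, probOf p T t := sum_le_sum fun t _ =>
          mul_le_of_le_one_right (probOf_nonneg hp0 _ _) (prod_le_one
            (fun i _ => sum_nonneg fun y _ =>
              div_nonneg (probOf_nonneg hp0 _ _) (probOf_nonneg hp0 _ _))
            fun i _ => hfactor t i)
      _ = 1 := by rw [sum_probOf, hp1]
  have hlogb : ∀ ω, 0 < p ω → logb 2 (q (Y ω, T ω))
      = logb 2 (probOf p T (T ω)) + ∑ i, (logb 2 (probOf p (fun ω => (a (T ω) i, Y ω i))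
          (a (T ω) i, Y ω i)) - logb 2 (probOf p (fun ω => a (T ω) i) (a (T ω) i))) := by
    intro ω hω
    have hAY := fun i => (probOf_apply_pos hp0 (fun ω => (a (T ω) i, Y ω i)) hω).ne'
    have hA := fun i => (probOf_apply_pos hp0 (fun ω => a (T ω) i) hω).ne'
    simp only [q]
    rw [logb_mul (probOf_apply_pos hp0 T hω).ne' (prod_ne_zero_iff.2 fun i _ =>
        div_ne_zero (hAY i) (hA i)), logb_prod _ _ fun i _ => div_ne_zero (hAY i) (hA i)]
    simp only [logb_div (hAY _) (hA _)]
  have hpos : ∀ ω, 0 < p ω → 0 < q (Y ω, T ω) := fun ω hω =>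
    mul_pos (probOf_apply_pos hp0 T hω) (prod_pos fun i _ =>
      div_pos (probOf_apply_pos hp0 (fun ω => (a (T ω) i, Y ω i)) hω)
        (probOf_apply_pos hp0 (fun ω => a (T ω) i) hω))
  calc ent p (fun ω => (Y ω, T ω)) ≤ -∑ ω, p ω * logb 2 (q (Y ω, T ω)) :=
        ent_le_neg_sum_mul_logb hp0 hp1 _ q hq0 hq1 hpos
    _ = _ := by
      rw [sum_mul_congr_of_pos hp0 hlogb]
      simp only [ent_eq_neg_sum_mul_logb, mul_add, mul_sum, mul_sub, sum_add_distrib,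
        sum_sub_distrib]
      rw [sum_comm (f := fun ω i => p ω * logb 2 _), sum_comm (f := fun ω i => p ω * logb 2 _)]
      simp only [sum_neg_distrib]
      ring

/-- Under the memoryless action-dependent source setup, if moreover `T = g (X^n)` for a
deterministic map `g` into a finite set `𝒯` and `A^n = h T` (so `f = h ∘ g`), then
`H(T) + H(X^n | Y^n, T) ≥ ∑ i, [ I(X_i ; A_i) + H(X_i | A_i, Y_i) ]`. -/
theorem stmt_0 {n : ℕ} {𝒳 𝒜 𝒴 𝒯 : Type*}
    [Fintype 𝒳] [DecidableEq 𝒳] [Fintype 𝒜] [DecidableEq 𝒜] [Fintype 𝒴] [DecidableEq 𝒴]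
    [Fintype 𝒯] [DecidableEq 𝒯]
    (μ : 𝒳 → ℝ) (hμ0 : ∀ x, 0 ≤ μ x) (hμ1 : ∑ x, μ x = 1)
    (f : (Fin n → 𝒳) → (Fin n → 𝒜))
    (W : 𝒳 → 𝒜 → 𝒴 → ℝ) (hW0 : ∀ x a y, 0 ≤ W x a y) (hW1 : ∀ x a, ∑ y, W x a y = 1)
    (g : (Fin n → 𝒳) → 𝒯) (h : 𝒯 → (Fin n → 𝒜)) (hfgh : ∀ x, f x = h (g x)) :
    ent (jointPmf μ f W) (fun ω => g ω.1)
        + condEnt (jointPmf μ f W) (fun ω => ω.1) (fun ω => (ω.2, g ω.1))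
      ≥ ∑ i : Fin n,
          (mutInfo (jointPmf μ f W) (fun ω => ω.1 i) (fun ω => f ω.1 i)
            + condEnt (jointPmf μ f W) (fun ω => ω.1 i) (fun ω => (f ω.1 i, ω.2 i))) := by
  have hjoint := ent_jointPmf_of_injective hμ0 hμ1 hW0 hW1 (f := f)
    (Z := fun ω => (ω.1, (ω.2, g ω.1)))
    (Function.LeftInverse.injective (g := fun z => (z.1, z.2.1)) fun _ => rfl)
  have hobs := ent_pair_le (jointPmf_nonneg (f := f) hμ0 hW0) (sum_jointPmf hμ1 hW1)
    (fun ω => ω.2) (fun ω => g ω.1) h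
  simp only [← hfgh] at hobs
  simp only [mutInfo, condEnt, sum_add_distrib, sum_sub_distrib] at hjoint hobs ⊢
  linarith
end

section
/- (Example 1, case A formulas.) For the Example 1 joint distribution with parameters α, β ∈ [0,1] satisfying α + β̄ > 0: I(X;A) + H(X | Y, A) = 1 − 0.5(α + β̄)·H_b(α/(α + β̄)); H(Y | X, A) = 0.5(ᾱ + β); and I(X;A) + H(X, Y | A) = 1 + 0.5(ᾱ + β). -/
open Finset

/-- Binary entropy `H_b(q) = −q·log₂ q − (1−q)·log₂(1−q)` (with `0·log 0 = 0`). -/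
noncomputable def binEnt (q : ℝ) : ℝ :=
  Real.negMulLog q / Real.log 2 + Real.negMulLog (1 - q) / Real.log 2

/-- The coordinate random variables on the sample space `Bool × Bool × Bool`
(`true` encodes `1`, `false` encodes `0`). -/
def Xv : Bool × Bool × Bool → Bool := fun ω => ω.1

def Av : Bool × Bool × Bool → Bool := fun ω => ω.2.1

def Yv : Bool × Bool × Bool → Bool := fun ω => ω.2.2

/-- Example 1 joint pmf on `{0,1}³`: `X ∼ Bern(1/2)`; `P(A=1|X=0) = α`, `P(A=0|X=1) = β`;
given `(X,A)`: if `A=1` then `Y = X`, and if `A=0` then `Y ∼ Bern(1/2)` independent of `X`. -/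
noncomputable def ex1Pmf (α β : ℝ) : Bool × Bool × Bool → ℝ := fun ω =>
  (1/2) * (if ω.1 then (if ω.2.1 then 1 - β else β) else (if ω.2.1 then α else 1 - α)) *
    (if ω.2.1 then (if ω.2.2 = ω.1 then 1 else 0) else 1/2)

/-
Every entropy involved is a sum of `negMulLog` over atoms whose masses are halves or quarters of
`α, ᾱ, β, β̄, α+β̄, ᾱ+β`. Since `negMulLog (x / c) = (negMulLog x + x log c) / c`, pulling these
factors out leaves linear terms plus `negMulLog` of those six numbers, and these mostly cancel. The
one surviving non-linear combination, `negMulLog α + negMulLog β̄ - negMulLog (α+β̄)`, is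
`(α+β̄)·H_b(α/(α+β̄))` by the grouping property of entropy.
-/

open Real

theorem negMulLog_div (x c : ℝ) : negMulLog (x / c) = (negMulLog x + x * log c) / c := by
  rw [div_eq_mul_inv, negMulLog_mul, negMulLog, negMulLog, log_inv]
  ring

theorem mul_binEntropy_div_add (a b : ℝ) :
    (a + b) * binEntropy (a / (a + b)) = negMulLog a + negMulLog b - negMulLog (a + b) := by
  rcases eq_or_ne (a + b) 0 with hab | hab
  · obtain rfl : b = -a := by linarith
    simp [negMulLog]
  · have hb : 1 - a / (a + b) = b / (a + b) := by field_simp; ring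
    rw [binEntropy_eq_negMulLog_add_negMulLog_one_sub, hb, negMulLog_div, negMulLog_div]
    simp only [negMulLog]
    field_simp
    ring

theorem binEnt_eq_binEntropy_div_log_two (q : ℝ) : binEnt q = binEntropy q / log 2 := by
  rw [binEnt, binEntropy_eq_negMulLog_add_negMulLog_one_sub, add_div]

theorem ent_comp_equiv {Ω S T : Type*} [Fintype Ω] [Fintype S] [Fintype T] [DecidableEq S]
    [DecidableEq T] (p : Ω → ℝ) (X : Ω → S) (e : S ≃ T) : ent p (e ∘ X) = ent p X := by
  have hprob (s : S) : probOf p (e ∘ X) (e s) = probOf p X s := by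
    simp only [probOf, Function.comp_apply, e.apply_eq_iff_eq]
  simp only [ent, ← e.sum_comp, hprob]

section Example1

variable (α β : ℝ)

lemma ent_ex1Pmf_Xv : ent (ex1Pmf α β) Xv = 1 := by
  have h : ent (ex1Pmf α β) Xv = 2 * negMulLog (1 / 2) / log 2 := by
    simp only [ent, probOf, ex1Pmf, Xv, Fintype.sum_prod_type, Fintype.sum_bool]
    norm_num
    ring_nf
  rw [h, negMulLog_div, negMulLog_one, zero_add]
  field_simp

lemma ent_ex1Pmf_Av : ent (ex1Pmf α β) Av =
    1 + (negMulLog (α + (1 - β)) + negMulLog ((1 - α) + β)) / (2 * log 2) := by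
  have h : ent (ex1Pmf α β) Av =
      (negMulLog ((α + (1 - β)) / 2) + negMulLog (((1 - α) + β) / 2)) / log 2 := by
    simp only [ent, probOf, ex1Pmf, Av, Fintype.sum_prod_type, Fintype.sum_bool]
    norm_num
    ring_nf
  rw [h, negMulLog_div, negMulLog_div]
  field_simp
  ring

lemma ent_ex1Pmf_Xv_Av : ent (ex1Pmf α β) (fun ω => (Xv ω, Av ω)) =
    1 + (negMulLog α + negMulLog (1 - α) + negMulLog β + negMulLog (1 - β)) / (2 * log 2) := by
  have h : ent (ex1Pmf α β) (fun ω => (Xv ω, Av ω)) = (negMulLog (α / 2)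
      + negMulLog ((1 - α) / 2) + negMulLog (β / 2) + negMulLog ((1 - β) / 2)) / log 2 := by
    simp only [ent, probOf, ex1Pmf, Xv, Av, Fintype.sum_prod_type, Fintype.sum_bool]
    norm_num
    ring_nf
  rw [h, negMulLog_div, negMulLog_div, negMulLog_div, negMulLog_div]
  field_simp
  ring

lemma ent_ex1Pmf_Yv_Av : ent (ex1Pmf α β) (fun ω => (Yv ω, Av ω)) =
    1 + ((1 - α) + β) / 2
      + (negMulLog α + negMulLog (1 - β) + negMulLog ((1 - α) + β)) / (2 * log 2) := by
  have h : ent (ex1Pmf α β) (fun ω => (Yv ω, Av ω)) = (negMulLog (α / 2)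
      + negMulLog ((1 - β) / 2) + 2 * negMulLog (((1 - α) + β) / 4)) / log 2 := by
    simp only [ent, probOf, ex1Pmf, Yv, Av, Fintype.sum_prod_type, Fintype.sum_bool]
    norm_num
    ring_nf
  rw [h, negMulLog_div, negMulLog_div, negMulLog_div, show (4 : ℝ) = 2 ^ 2 by norm_num, log_pow]
  field_simp
  ring

lemma ent_ex1Pmf_Xv_Yv_Av : ent (ex1Pmf α β) (fun ω => (Xv ω, (Yv ω, Av ω))) =
    1 + ((1 - α) + β) / 2
      + (negMulLog α + negMulLog (1 - α) + negMulLog β + negMulLog (1 - β)) / (2 * log 2) := by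
  have h : ent (ex1Pmf α β) (fun ω => (Xv ω, (Yv ω, Av ω))) = (negMulLog (α / 2)
      + negMulLog ((1 - β) / 2) + 2 * negMulLog ((1 - α) / 4) + 2 * negMulLog (β / 4))
        / log 2 := by
    simp only [ent, probOf, ex1Pmf, Xv, Yv, Av, Fintype.sum_prod_type, Fintype.sum_bool]
    norm_num
    ring_nf
  rw [h, negMulLog_div, negMulLog_div, negMulLog_div, negMulLog_div,
    show (4 : ℝ) = 2 ^ 2 by norm_num, log_pow]
  field_simp
  ring

end Example1

theorem stmt_7_general (α β : ℝ) :
    (mutInfo (ex1Pmf α β) Xv Av + condEnt (ex1Pmf α β) Xv (fun ω => (Yv ω, Av ω))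
        = 1 - 0.5 * (α + (1 - β)) * binEnt (α / (α + (1 - β))))
    ∧ condEnt (ex1Pmf α β) Yv (fun ω => (Xv ω, Av ω)) = 0.5 * ((1 - α) + β)
    ∧ (mutInfo (ex1Pmf α β) Xv Av + condEnt (ex1Pmf α β) (fun ω => (Xv ω, Yv ω)) Av
        = 1 + 0.5 * ((1 - α) + β)) := by
  have ent_Yv_Xv_Av : ent (ex1Pmf α β) (fun ω => (Yv ω, (Xv ω, Av ω)))
      = ent (ex1Pmf α β) (fun ω => (Xv ω, (Yv ω, Av ω))) :=
    ent_comp_equiv (ex1Pmf α β) (fun ω => (Xv ω, (Yv ω, Av ω)))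
      ((Equiv.prodAssoc Bool Bool Bool).symm.trans <|
        ((Equiv.prodComm Bool Bool).prodCongr (Equiv.refl Bool)).trans
          (Equiv.prodAssoc Bool Bool Bool))
  have ent_Xv_Yv_Av : ent (ex1Pmf α β) (fun ω => ((Xv ω, Yv ω), Av ω))
      = ent (ex1Pmf α β) (fun ω => (Xv ω, (Yv ω, Av ω))) :=
    ent_comp_equiv (ex1Pmf α β) (fun ω => (Xv ω, (Yv ω, Av ω)))
      (Equiv.prodAssoc Bool Bool Bool).symm
  have grouping := mul_binEntropy_div_add α (1 - β)
  simp only [mutInfo, condEnt, ent_Yv_Xv_Av, ent_Xv_Yv_Av, ent_ex1Pmf_Xv, ent_ex1Pmf_Av,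
    ent_ex1Pmf_Xv_Av, ent_ex1Pmf_Yv_Av, ent_ex1Pmf_Xv_Yv_Av, binEnt_eq_binEntropy_div_log_two]
  refine ⟨?_, by ring, by ring⟩
  field_simp
  linear_combination grouping

/-- Example 1, case A formulas: for `α, β ∈ [0,1]` with `α + (1−β) > 0`,
`I(X;A) + H(X|Y,A) = 1 − 0.5(α+β̄)·H_b(α/(α+β̄))`, `H(Y|X,A) = 0.5(ᾱ+β)`, and
`I(X;A) + H(X,Y|A) = 1 + 0.5(ᾱ+β)`. -/
theorem stmt_7 (α β : ℝ) (hα : α ∈ Set.Icc (0:ℝ) 1) (hβ : β ∈ Set.Icc (0:ℝ) 1)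
    (hpos : 0 < α + (1 - β)) :
    (mutInfo (ex1Pmf α β) Xv Av + condEnt (ex1Pmf α β) Xv (fun ω => (Yv ω, Av ω))
        = 1 - 0.5 * (α + (1 - β)) * binEnt (α / (α + (1 - β))))
    ∧ condEnt (ex1Pmf α β) Yv (fun ω => (Xv ω, Av ω)) = 0.5 * ((1 - α) + β)
    ∧ (mutInfo (ex1Pmf α β) Xv Av + condEnt (ex1Pmf α β) (fun ω => (Xv ω, Yv ω)) Av
        = 1 + 0.5 * ((1 - α) + β)) :=
  stmt_7_general α β
end

section
/- (Example 1, case B formula.) For the Example 1 joint distribution with parameters α, β ∈ [0,1]: I(X;A) − I(Y;A) + H(X | Y, A) = 1 − H_b(0.5α + 0.25(β + ᾱ)) + 0.5(ᾱ + β). -/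
open Finset

/-- Example 1, case B formula: for `α, β ∈ [0,1]`,
`I(X;A) − I(Y;A) + H(X|Y,A) = 1 − H_b(0.5α + 0.25(β + ᾱ)) + 0.5(ᾱ + β)`. -/
theorem stmt_8 (α β : ℝ) (hα : α ∈ Set.Icc (0:ℝ) 1) (hβ : β ∈ Set.Icc (0:ℝ) 1) :
    mutInfo (ex1Pmf α β) Xv Av - mutInfo (ex1Pmf α β) Yv Av
        + condEnt (ex1Pmf α β) Xv (fun ω => (Yv ω, Av ω))
      = 1 - binEnt (0.5 * α + 0.25 * (β + (1 - α))) + 0.5 * ((1 - α) + β) := by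
  simp only [mutInfo, condEnt, ent, probOf, binEnt, ex1Pmf, Xv, Av, Yv,
    Fintype.sum_prod_type, Fintype.sum_bool]
  norm_num
  ring_nf
  have hl : Real.log 2 ≠ 0 := ne_of_gt (Real.log_pos (by norm_num))
  have f1 : Real.negMulLog (1/2) = 1/2 * Real.log 2 := by
    simp [Real.negMulLog, one_div, Real.log_inv]
  have f4 : Real.negMulLog (1/4) = 1/2 * Real.log 2 := by
    rw [show (1/4:ℝ) = (1/2)*(1/2) by norm_num, Real.negMulLog_mul, f1]; try ring
  have h2 : ∀ x : ℝ, Real.negMulLog (x*(1/2))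
      = 1/2 * Real.negMulLog x + x * (1/2 * Real.log 2) := by
    intro x; rw [Real.negMulLog_mul, f1]; try ring
  have h4 : ∀ x : ℝ, Real.negMulLog (x*(1/4))
      = 1/4 * Real.negMulLog x + x * (1/2 * Real.log 2) := by
    intro x; rw [Real.negMulLog_mul, f4]; try ring
  rw [show (1/4 + α*(-1/4):ℝ) = (1-α)*(1/4) by ring,
      show (1/2 + α*(-1/2):ℝ) = (1-α)*(1/2) by ring,
      h2 β, h2 (1-α), h4 β, h4 (1-α), f1]
  field_simp
  ring
end

section
/- (Example 2, case A formula.) For the Example 2 joint distribution with parameters α, β ∈ (0,1) and δ ∈ [0,1]: I(X;A) + H(X | Y, A) = 1 − 0.5(α+β̄)·H_b(β̄/(α+β̄)) − 0.5(ᾱ+β)·H_b(ᾱ/(ᾱ+β)) + 0.5(ᾱ+βδ)·H_b(ᾱ/(ᾱ+βδ)) + 0.5(β̄+αδ)·H_b(β̄/(β̄+αδ)). -/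
open Finset

/-- Example 2 joint pmf on `{0,1}³`: `X ∼ Bern(1/2)`; `P(A=1|X=0) = α`, `P(A=0|X=1) = β`;
given `(X,A)`: if `A=0` then `Y` is the output of a Z-channel with parameter `δ`
(`P(Y=0|X=0)=1`, `P(Y=0|X=1)=δ`), and if `A=1` then `Y` is the output of an S-channel with
parameter `δ` (`P(Y=1|X=1)=1`, `P(Y=1|X=0)=δ`). -/
noncomputable def ex2Pmf (α β δ : ℝ) : Bool × Bool × Bool → ℝ := fun ω =>
  (1/2) * (if ω.1 then (if ω.2.1 then 1 - β else β) else (if ω.2.1 then α else 1 - α)) *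
    (if ω.2.1
      then (if ω.1 then (if ω.2.2 then 1 else 0) else (if ω.2.2 then δ else 1 - δ))
      else (if ω.1 then (if ω.2.2 then 1 - δ else δ) else (if ω.2.2 then 0 else 1)))

lemma Ldiv (u s : ℝ) (hs : s ≠ 0) :
    Real.negMulLog (u / s) = (Real.negMulLog u + u * Real.log s) / s := by
  rw [div_eq_mul_inv, Real.negMulLog_mul]
  simp only [Real.negMulLog, Real.log_inv]
  field_simp

lemma binEnt_scaled (u s : ℝ) (hs : s ≠ 0) :
    s * binEnt (u / s) = (Real.negMulLog u + Real.negMulLog (s - u) - Real.negMulLog s)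
      / Real.log 2 := by
  unfold binEnt
  rw [show (1 - u / s) = (s - u) / s by field_simp, Ldiv u s hs, Ldiv (s-u) s hs]
  unfold Real.negMulLog
  field_simp
  ring

set_option maxHeartbeats 2000000 in
/-- Example 2, case A formula: for `α, β ∈ (0,1)` and `δ ∈ [0,1]`,
`I(X;A) + H(X|Y,A) = 1 − 0.5(α+β̄)·H_b(β̄/(α+β̄)) − 0.5(ᾱ+β)·H_b(ᾱ/(ᾱ+β))
  + 0.5(ᾱ+βδ)·H_b(ᾱ/(ᾱ+βδ)) + 0.5(β̄+αδ)·H_b(β̄/(β̄+αδ))`. -/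
theorem stmt_12 (α β δ : ℝ) (hα : α ∈ Set.Ioo (0:ℝ) 1) (hβ : β ∈ Set.Ioo (0:ℝ) 1)
    (hδ : δ ∈ Set.Icc (0:ℝ) 1) :
    mutInfo (ex2Pmf α β δ) Xv Av + condEnt (ex2Pmf α β δ) Xv (fun ω => (Yv ω, Av ω))
      = 1 - 0.5 * (α + (1 - β)) * binEnt ((1 - β) / (α + (1 - β)))
          - 0.5 * ((1 - α) + β) * binEnt ((1 - α) / ((1 - α) + β))
          + 0.5 * ((1 - α) + β * δ) * binEnt ((1 - α) / ((1 - α) + β * δ))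
          + 0.5 * ((1 - β) + α * δ) * binEnt ((1 - β) / ((1 - β) + α * δ)) := by
  obtain ⟨hα0, hα1⟩ := hα
  obtain ⟨hβ0, hβ1⟩ := hβ
  obtain ⟨hδ0, hδ1⟩ := hδ
  have hlog : (0:ℝ) < Real.log 2 := Real.log_pos (by norm_num)
  have hlog' : Real.log 2 ≠ 0 := ne_of_gt hlog
  have hs1 : α + (1 - β) ≠ 0 := by nlinarith
  have hs2 : (1 - α) + β ≠ 0 := by nlinarith
  have hs3 : (1 - α) + β * δ ≠ 0 := by nlinarith
  have hs4 : (1 - β) + α * δ ≠ 0 := by nlinarith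
  have halfL : ∀ u : ℝ, Real.negMulLog (u / 2) = (Real.negMulLog u + u * Real.log 2) / 2 :=
    fun u => Ldiv u 2 two_ne_zero
  have hX : ent (ex2Pmf α β δ) Xv
      = (Real.negMulLog (1/2) + Real.negMulLog (1/2)) / Real.log 2 := by
    simp [ent, probOf, ex2Pmf, Xv, Fintype.sum_prod_type, Fintype.sum_bool]
    ring_nf
  have hA : ent (ex2Pmf α β δ) Av
      = (Real.negMulLog ((α + (1 - β))/2) + Real.negMulLog (((1 - α) + β)/2)) / Real.log 2 := by
    simp [ent, probOf, ex2Pmf, Av, Fintype.sum_prod_type, Fintype.sum_bool]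
    ring_nf
  have hXA : ent (ex2Pmf α β δ) (fun ω => (Xv ω, Av ω))
      = (Real.negMulLog ((1 - α)/2) + Real.negMulLog (α/2) + Real.negMulLog (β/2) + Real.negMulLog ((1 - β)/2)) / Real.log 2 := by
    simp [ent, probOf, ex2Pmf, Xv, Av, Fintype.sum_prod_type, Fintype.sum_bool]
    ring_nf
  have hYA : ent (ex2Pmf α β δ) (fun ω => (Yv ω, Av ω))
      = (Real.negMulLog (((1 - α) + β * δ)/2) + Real.negMulLog (β * (1 - δ)/2) + Real.negMulLog (α * (1 - δ)/2)
          + Real.negMulLog (((1 - β) + α * δ)/2)) / Real.log 2 := by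
    simp [ent, probOf, ex2Pmf, Yv, Av, Fintype.sum_prod_type, Fintype.sum_bool]
    ring_nf
  have hXYA : ent (ex2Pmf α β δ) (fun ω => (Xv ω, (Yv ω, Av ω)))
      = (Real.negMulLog ((1 - α)/2) + Real.negMulLog (α * (1 - δ)/2) + Real.negMulLog (α * δ/2) + Real.negMulLog (β * δ/2)
          + Real.negMulLog (β * (1 - δ)/2) + Real.negMulLog ((1 - β)/2)) / Real.log 2 := by
    simp [ent, probOf, ex2Pmf, Xv, Yv, Av, Fintype.sum_prod_type, Fintype.sum_bool]
    ring_nf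
  have b1 : (0.5:ℝ) * (α + (1 - β)) * binEnt ((1-β)/(α+(1-β)))
      = 0.5 * ((Real.negMulLog (1-β) + Real.negMulLog ((α+(1-β)) - (1-β))
          - Real.negMulLog (α+(1-β))) / Real.log 2) := by
    rw [mul_assoc, binEnt_scaled (1-β) (α+(1-β)) hs1]
  have b2 : (0.5:ℝ) * ((1 - α) + β) * binEnt ((1-α)/((1-α)+β))
      = 0.5 * ((Real.negMulLog (1-α) + Real.negMulLog (((1-α)+β) - (1-α))
          - Real.negMulLog ((1-α)+β)) / Real.log 2) := by
    rw [mul_assoc, binEnt_scaled (1-α) ((1-α)+β) hs2]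
  have b3 : (0.5:ℝ) * ((1 - α) + β * δ) * binEnt ((1-α)/((1-α)+β*δ))
      = 0.5 * ((Real.negMulLog (1-α) + Real.negMulLog (((1-α)+β*δ) - (1-α))
          - Real.negMulLog ((1-α)+β*δ)) / Real.log 2) := by
    rw [mul_assoc, binEnt_scaled (1-α) ((1-α)+β*δ) hs3]
  have b4 : (0.5:ℝ) * ((1 - β) + α * δ) * binEnt ((1-β)/((1-β)+α*δ))
      = 0.5 * ((Real.negMulLog (1-β) + Real.negMulLog (((1-β)+α*δ) - (1-β))
          - Real.negMulLog ((1-β)+α*δ)) / Real.log 2) := by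
    rw [mul_assoc, binEnt_scaled (1-β) ((1-β)+α*δ) hs4]
  simp only [mutInfo, condEnt]
  rw [hX, hA, hXA, hYA, hXYA, b1, b2, b3, b4]
  simp only [halfL, Real.negMulLog_one, Real.negMulLog_zero]
  field_simp
  ring_nf
end

section
/- (Example 2, case B formula.) For the Example 2 joint distribution with parameters α, β ∈ [0,1] and δ ∈ [0,1]: I(X;A) − I(Y;A) + H(X | Y, A) = 1 + 0.5(α+β)·H_b(δ) − H_b(0.5(1 + αδ − βδ)). In particular, P(Y=1) = 0.5(1 + αδ − βδ). -/
open Finset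

section AuxStmt13
variable (α β δ : ℝ)

private lemma pY1 : probOf (ex2Pmf α β δ) Yv true = 0.5 * (1 + α * δ - β * δ) := by
  simp [probOf, ex2Pmf, Yv, Fintype.sum_prod_type]; try ring
private lemma pY0 : probOf (ex2Pmf α β δ) Yv false = 1 - 0.5 * (1 + α * δ - β * δ) := by
  simp [probOf, ex2Pmf, Yv, Fintype.sum_prod_type]; try ring
private lemma pX1 : probOf (ex2Pmf α β δ) Xv true = 1/2 := by
  simp [probOf, ex2Pmf, Xv, Fintype.sum_prod_type]; try ring
private lemma pX0 : probOf (ex2Pmf α β δ) Xv false = 1/2 := by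
  simp [probOf, ex2Pmf, Xv, Fintype.sum_prod_type]; try ring
private lemma pXA00 : probOf (ex2Pmf α β δ) (fun ω => (Xv ω, Av ω)) (false, false) = 1/2*(1-α) := by
  simp [probOf, ex2Pmf, Xv, Av, Fintype.sum_prod_type]; try ring
private lemma pXA01 : probOf (ex2Pmf α β δ) (fun ω => (Xv ω, Av ω)) (false, true) = 1/2*α := by
  simp [probOf, ex2Pmf, Xv, Av, Fintype.sum_prod_type]; try ring
private lemma pXA10 : probOf (ex2Pmf α β δ) (fun ω => (Xv ω, Av ω)) (true, false) = 1/2*β := by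
  simp [probOf, ex2Pmf, Xv, Av, Fintype.sum_prod_type]; try ring
private lemma pXA11 : probOf (ex2Pmf α β δ) (fun ω => (Xv ω, Av ω)) (true, true) = 1/2*(1-β) := by
  simp [probOf, ex2Pmf, Xv, Av, Fintype.sum_prod_type]; try ring
private lemma pJ000 : probOf (ex2Pmf α β δ) (fun ω => (Xv ω, (Yv ω, Av ω))) (false, (false, false)) = 1/2*(1-α) := by
  simp [probOf, ex2Pmf, Xv, Av, Yv, Fintype.sum_prod_type]; try ring
private lemma pJ010 : probOf (ex2Pmf α β δ) (fun ω => (Xv ω, (Yv ω, Av ω))) (false, (true, false)) = 0 := by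
  simp [probOf, ex2Pmf, Xv, Av, Yv, Fintype.sum_prod_type]; try ring
private lemma pJ001 : probOf (ex2Pmf α β δ) (fun ω => (Xv ω, (Yv ω, Av ω))) (false, (false, true)) = (1/2*α)*(1-δ) := by
  simp [probOf, ex2Pmf, Xv, Av, Yv, Fintype.sum_prod_type]; try ring
private lemma pJ011 : probOf (ex2Pmf α β δ) (fun ω => (Xv ω, (Yv ω, Av ω))) (false, (true, true)) = (1/2*α)*δ := by
  simp [probOf, ex2Pmf, Xv, Av, Yv, Fintype.sum_prod_type]; try ring
private lemma pJ100 : probOf (ex2Pmf α β δ) (fun ω => (Xv ω, (Yv ω, Av ω))) (true, (false, false)) = (1/2*β)*δ := by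
  simp [probOf, ex2Pmf, Xv, Av, Yv, Fintype.sum_prod_type]; try ring
private lemma pJ110 : probOf (ex2Pmf α β δ) (fun ω => (Xv ω, (Yv ω, Av ω))) (true, (true, false)) = (1/2*β)*(1-δ) := by
  simp [probOf, ex2Pmf, Xv, Av, Yv, Fintype.sum_prod_type]; try ring
private lemma pJ101 : probOf (ex2Pmf α β δ) (fun ω => (Xv ω, (Yv ω, Av ω))) (true, (false, true)) = 0 := by
  simp [probOf, ex2Pmf, Xv, Av, Yv, Fintype.sum_prod_type]; try ring
private lemma pJ111 : probOf (ex2Pmf α β δ) (fun ω => (Xv ω, (Yv ω, Av ω))) (true, (true, true)) = 1/2*(1-β) := by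
  simp [probOf, ex2Pmf, Xv, Av, Yv, Fintype.sum_prod_type]; try ring

private lemma hL2 : Real.log 2 ≠ 0 := ne_of_gt (Real.log_pos (by norm_num))

private lemma nmHalf : Real.negMulLog (1/2 : ℝ) = 1/2 * Real.log 2 := by
  rw [Real.negMulLog, one_div, Real.log_inv]; ring

private lemma entX : ent (ex2Pmf α β δ) Xv = 1 := by
  simp only [ent, Fintype.sum_bool, pX1, pX0, nmHalf]
  field_simp
  try ring

private lemma entY : ent (ex2Pmf α β δ) Yv = binEnt (0.5 * (1 + α * δ - β * δ)) := by
  simp only [ent, Fintype.sum_bool, pY1, pY0, binEnt]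

private lemma entJ : ent (ex2Pmf α β δ) (fun ω => (Xv ω, (Yv ω, Av ω)))
    = ent (ex2Pmf α β δ) (fun ω => (Xv ω, Av ω)) + (1/2*α + 1/2*β) * binEnt δ := by
  simp only [ent, Fintype.sum_prod_type, Fintype.sum_bool, pJ000, pJ001, pJ010, pJ011,
    pJ100, pJ101, pJ110, pJ111, pXA00, pXA01, pXA10, pXA11,
    Real.negMulLog_mul, Real.negMulLog_zero, binEnt]
  field_simp
  try ring

end AuxStmt13

/-- Example 2, case B formula: for `α, β ∈ [0,1]` and `δ ∈ [0,1]`,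
`I(X;A) − I(Y;A) + H(X|Y,A) = 1 + 0.5(α+β)·H_b(δ) − H_b(0.5(1 + αδ − βδ))`;
in particular `P(Y=1) = 0.5(1 + αδ − βδ)`. -/
theorem stmt_13 (α β δ : ℝ) (hα : α ∈ Set.Icc (0:ℝ) 1) (hβ : β ∈ Set.Icc (0:ℝ) 1)
    (hδ : δ ∈ Set.Icc (0:ℝ) 1) :
    (mutInfo (ex2Pmf α β δ) Xv Av - mutInfo (ex2Pmf α β δ) Yv Av
        + condEnt (ex2Pmf α β δ) Xv (fun ω => (Yv ω, Av ω))
      = 1 + 0.5 * (α + β) * binEnt δ - binEnt (0.5 * (1 + α * δ - β * δ)))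
    ∧ probOf (ex2Pmf α β δ) Yv true = 0.5 * (1 + α * δ - β * δ) := by
  refine ⟨?_, pY1 α β δ⟩
  simp only [mutInfo, condEnt]
  rw [entX, entY, entJ]
  ring
end
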